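/- arXiv:1004.0875 — 2 statements merged into one kernel-verified Lean document; each statement's English description precedes it below -/
import Mathlib

section
/- Let H be a Hopf algebra over a commutative ring k and A a unital associative k-algebra with a left H-module algebra action ▷. Then the group of unital algebra homomorphisms H → Z(A) under convolution acts freely and transitively from the right on the set of momentum maps for ▷; that is, for any two momentum maps J and J' for ▷ there exists a unique unital algebra homomorphism 𝗓 : H → Z(A) such that J' = J * 𝗓 (i.e. J'(g) = J(g₁)𝗓(g₂) for all g ∈ H). -/
open scoped TensorProduct

noncomputable section

namespace EquivariantMorita

/-- The Sweedler-type map `h ↦ μ (f h₍₁₎) (g h₍₂₎)` (with implicit summation over the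
Sweedler decomposition `Δ h = h₍₁₎ ⊗ h₍₂₎` of the comultiplication). -/
def sw (k : Type*) {H M N P : Type*} [CommRing k]
    [AddCommGroup H] [Module k H] [Coalgebra k H]
    [AddCommGroup M] [Module k M] [AddCommGroup N] [Module k N]
    [AddCommGroup P] [Module k P]
    (μ : M →ₗ[k] N →ₗ[k] P) (f : H →ₗ[k] M) (g : H →ₗ[k] N) : H →ₗ[k] P :=
  TensorProduct.lift μ ∘ₗ TensorProduct.map f g ∘ₗ (Coalgebra.comul : H →ₗ[k] H ⊗[k] H)

/-- The convolution-type map `h ↦ f (h₍₁₎) * g (h₍₂₎)`. -/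
def swMul (k : Type*) {H A : Type*} [CommRing k]
    [AddCommGroup H] [Module k H] [Coalgebra k H] [Ring A] [Algebra k A]
    (f g : H →ₗ[k] A) : H →ₗ[k] A :=
  sw k (LinearMap.mul k A) f g

section ModuleAlgebra

variable (k : Type*) [CommRing k] {H : Type*} [Ring H] [HopfAlgebra k H]
variable {A : Type*} [Ring A] [Algebra k A]

/-- `act : H × A → A` (given as a `k`-bilinear map) makes `A` a left `H`-module algebra:
`(gh) ▷ a = g ▷ (h ▷ a)`, `1 ▷ a = a`, `h ▷ (ab) = (h₍₁₎ ▷ a)(h₍₂₎ ▷ b)` and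
`h ▷ 1 = ε(h) 1`. -/
structure IsModuleAlgebraAction (act : H →ₗ[k] A →ₗ[k] A) : Prop where
  mul_act : ∀ (g h : H) (a : A), act (g * h) a = act g (act h a)
  one_act : ∀ a : A, act 1 a = a
  act_mul : ∀ (h : H) (a b : A), act h (a * b) = swMul k (act.flip a) (act.flip b) h
  act_one : ∀ h : H, act h 1 = Coalgebra.counit (R := k) h • (1 : A)

/-- Membership in `Gl(H,A)`: (i) `𝖺(1) = 1`, (ii) `𝖺(gh) = 𝖺(g₍₁₎)(g₍₂₎ ▷ 𝖺(h))`,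
(iii) `(h₍₁₎ ▷ b) 𝖺(h₍₂₎) = 𝖺(h₍₁₎)(h₍₂₎ ▷ b)`. -/
structure MemGl (act : H →ₗ[k] A →ₗ[k] A) (a : H →ₗ[k] A) : Prop where
  map_one' : a 1 = 1
  map_mul' : ∀ g h : H, a (g * h) = swMul k a (act.flip (a h)) g
  comm' : ∀ (h : H) (b : A), swMul k (act.flip b) a h = swMul k a (act.flip b) h

/-- `J` is a momentum map for the action `act`: it is a unital algebra homomorphism
`H → A` with `h ▷ a = J(h₍₁₎) a J(S(h₍₂₎))`. -/
structure IsMomentumMap (act : H →ₗ[k] A →ₗ[k] A) (J : H →ₗ[k] A) : Prop where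
  map_one' : J 1 = 1
  map_mul' : ∀ g h : H, J (g * h) = J g * J h
  inner' : ∀ (h : H) (a : A),
    act h a = swMul k J (LinearMap.mul k A a ∘ₗ (J ∘ₗ HopfAlgebra.antipode (R := k))) h

end ModuleAlgebra

end EquivariantMorita

/-! In the convolution algebra `WithConv (H →ₗ[k] A)` a unital algebra map `φ : H → A` is
invertible with inverse `φ ∘ S`, and the momentum-map condition reads `(· ▷ a) = J * c_a * J⁻¹`
with `c_a = ε(·) a`. So `J' = J * z` forces `z = J⁻¹ * J'`, and comparing the two expressions for
`(· ▷ a)` shows that this `z` commutes with every `c_a`, i.e. takes central values. Finally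
`z (g h) = J (S h₁) z(g) J' (h₂) = z(g) z(h)`, because `S` is an antihomomorphism and `z(g)` is
central. -/

namespace EquivariantMorita

open Coalgebra WithConv

theorem commute_inv_mul_of_conj_eq {M : Type*} [Monoid M] {u v : Mˣ} {c : M}
    (h : ↑u * c * ↑u⁻¹ = ↑v * c * ↑v⁻¹) : Commute c (↑u⁻¹ * ↑v) :=
  calc c * (↑u⁻¹ * ↑v) = ↑u⁻¹ * (↑u * c * ↑u⁻¹) * ↑v := by simp [mul_assoc]
    _ = ↑u⁻¹ * (↑v * c * ↑v⁻¹) * ↑v := by rw [h]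
    _ = ↑u⁻¹ * ↑v * c := by simp [mul_assoc]

section Convolution

variable {k : Type*} [CommRing k] {H : Type*} [Ring H] [HopfAlgebra k H]
variable {A : Type*} [Ring A] [Algebra k A]

theorem swMul_eq_ofConv_convMul (f g : H →ₗ[k] A) :
    swMul k f g = (toConv f * toConv g).ofConv := rfl

theorem convMul_apply_one (f g : WithConv (H →ₗ[k] A)) : (f * g) 1 = f 1 * g 1 := by
  simp [Algebra.TensorProduct.one_def]

theorem convMul_apply_mul_of_commute {u v : WithConv (H →ₗ[k] A)}
    (hu : ∀ g h : H, u (g * h) = u h * u g) (hv : ∀ g h : H, v (g * h) = v g * v h)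
    {g : H} (hg : ∀ b : A, Commute ((u * v) g) b) (h : H) :
    (u * v) (g * h) = (u * v) g * (u * v) h := by
  rw [((ℛ k g).mul (ℛ k h)).convMul_apply, (ℛ k h).convMul_apply, Finset.mul_sum,
    Coalgebra.Repr.mul_index, Finset.sum_product_right]
  refine Finset.sum_congr rfl fun j _ => ?_
  simp only [Coalgebra.Repr.mul_left, Coalgebra.Repr.mul_right, hu, hv]
  calc ∑ i ∈ (ℛ k g).index, u ((ℛ k h).left j) * u ((ℛ k g).left i) *
        (v ((ℛ k g).right i) * v ((ℛ k h).right j))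
      = u ((ℛ k h).left j) * (u * v) g * v ((ℛ k h).right j) := by
        rw [(ℛ k g).convMul_apply, Finset.mul_sum, Finset.sum_mul]
        simp only [mul_assoc]
    _ = (u * v) g * (u ((ℛ k h).left j) * v ((ℛ k h).right j)) := by
        rw [← (hg (u ((ℛ k h).left j))).eq, mul_assoc]

variable (k H) in
def convConst (a : A) : WithConv (H →ₗ[k] A) :=
  toConv (LinearMap.toSpanSingleton k A a ∘ₗ counit)

theorem convConst_mul_apply (a : A) (f : WithConv (H →ₗ[k] A)) (h : H) :
    (convConst k H a * f) h = a * f h := by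
  simp [convConst, ← LinearMap.map_comp_rTensor]

theorem mul_convConst_apply (f : WithConv (H →ₗ[k] A)) (a : A) (h : H) :
    (f * convConst k H a) h = f h * a := by
  simp [convConst, ← LinearMap.map_comp_lTensor]

theorem convConst_mul (a : A) (f : WithConv (H →ₗ[k] A)) :
    convConst k H a * f = toConv (LinearMap.mulLeft k a ∘ₗ f.ofConv) := by
  ext h; exact convConst_mul_apply a f h

theorem apply_commute_of_commute_convConst {f : WithConv (H →ₗ[k] A)}
    (hf : ∀ a : A, Commute (convConst k H a) f) (g : H) (b : A) : Commute (f g) b := by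
  have h := congrArg (fun x : WithConv (H →ₗ[k] A) => x g) (hf b).eq
  simp only [convConst_mul_apply, mul_convConst_apply] at h
  exact h.symm

theorem algHom_comp_convOne (φ : H →ₐ[k] A) :
    toConv (φ.toLinearMap ∘ₗ (1 : WithConv (H →ₗ[k] H)).ofConv) = 1 := by
  ext h; simp

def convUnitOfAlgHom (φ : H →ₐ[k] A) : (WithConv (H →ₗ[k] A))ˣ where
  val := toConv φ.toLinearMap
  inv := toConv (φ.toLinearMap ∘ₗ HopfAlgebra.antipode k)
  val_inv := by
    rw [← algHom_comp_convOne φ, ← LinearMap.id_mul_antipode,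
      LinearMap.algHom_comp_convMul_distrib]
    rfl
  inv_val := by
    rw [← algHom_comp_convOne φ, ← LinearMap.antipode_mul_id,
      LinearMap.algHom_comp_convMul_distrib]
    rfl

theorem convUnitOfAlgHom_inv_mul_apply_one (φ ψ : H →ₐ[k] A) :
    (↑(convUnitOfAlgHom φ)⁻¹ * ↑(convUnitOfAlgHom ψ) : WithConv (H →ₗ[k] A)) 1 = 1 := by
  rw [convMul_apply_one]
  simp [convUnitOfAlgHom]

theorem convUnitOfAlgHom_inv_mul_apply_mul (φ ψ : H →ₐ[k] A) {g : H}
    (hg : ∀ b : A, Commute ((↑(convUnitOfAlgHom φ)⁻¹ * ↑(convUnitOfAlgHom ψ) :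
      WithConv (H →ₗ[k] A)) g) b) (h : H) :
    (↑(convUnitOfAlgHom φ)⁻¹ * ↑(convUnitOfAlgHom ψ) : WithConv (H →ₗ[k] A)) (g * h) =
      (↑(convUnitOfAlgHom φ)⁻¹ * ↑(convUnitOfAlgHom ψ) : WithConv (H →ₗ[k] A)) g *
      (↑(convUnitOfAlgHom φ)⁻¹ * ↑(convUnitOfAlgHom ψ) : WithConv (H →ₗ[k] A)) h :=
  convMul_apply_mul_of_commute (by simp [convUnitOfAlgHom, HopfAlgebra.antipode_mul_antidistrib])
    (by simp [convUnitOfAlgHom]) hg h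

end Convolution

namespace IsMomentumMap

variable {k : Type*} [CommRing k] {H : Type*} [Ring H] [HopfAlgebra k H]
variable {A : Type*} [Ring A] [Algebra k A] {act : H →ₗ[k] A →ₗ[k] A} {J : H →ₗ[k] A}

def toAlgHom (hJ : IsMomentumMap k act J) : H →ₐ[k] A :=
  AlgHom.ofLinearMap J hJ.map_one' hJ.map_mul'

theorem coe_convUnitOfAlgHom_toAlgHom (hJ : IsMomentumMap k act J) :
    (convUnitOfAlgHom hJ.toAlgHom : WithConv (H →ₗ[k] A)) = toConv J := rfl

theorem toConv_act_flip (hJ : IsMomentumMap k act J) (a : A) :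
    toConv (act.flip a) = ↑(convUnitOfAlgHom hJ.toAlgHom) * convConst k H a *
      ↑(convUnitOfAlgHom hJ.toAlgHom)⁻¹ := by
  ext h
  rw [mul_assoc, convConst_mul]
  exact hJ.inner' h a

end IsMomentumMap

theorem existsUnique_central_twist_of_momentumMaps_general
    (k : Type*) [CommRing k]
    {H : Type*} [Ring H] [HopfAlgebra k H]
    {A : Type*} [Ring A] [Algebra k A]
    (act : H →ₗ[k] A →ₗ[k] A)
    (J J' : H →ₗ[k] A) (hJ : IsMomentumMap k act J) (hJ' : IsMomentumMap k act J') :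
    ∃! z : H →ₗ[k] A,
      ((∀ (g : H) (b : A), z g * b = b * z g) ∧ z 1 = 1
          ∧ ∀ g h : H, z (g * h) = z g * z h)
        ∧ ∀ g : H, J' g = swMul k J z g := by
  set u := convUnitOfAlgHom hJ.toAlgHom
  set u' := convUnitOfAlgHom hJ'.toAlgHom
  have hcentral : ∀ (g : H) (b : A), Commute ((↑u⁻¹ * ↑u' : WithConv (H →ₗ[k] A)) g) b :=
    apply_commute_of_commute_convConst fun a => commute_inv_mul_of_conj_eq <|
      (hJ.toConv_act_flip a).symm.trans (hJ'.toConv_act_flip a)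
  refine ⟨(↑u⁻¹ * ↑u' : WithConv (H →ₗ[k] A)).ofConv, ⟨⟨?_, ?_, ?_⟩, ?_⟩, ?_⟩
  · exact fun g b => (hcentral g b).eq
  · exact convUnitOfAlgHom_inv_mul_apply_one _ _
  · exact fun g => convUnitOfAlgHom_inv_mul_apply_mul _ _ (hcentral g)
  · intro g
    rw [swMul_eq_ofConv_convMul, toConv_ofConv, ← hJ.coe_convUnitOfAlgHom_toAlgHom,
      Units.mul_inv_cancel_left, hJ'.coe_convUnitOfAlgHom_toAlgHom]
  · rintro z ⟨-, hz⟩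
    have hJz : ↑u * toConv z = ↑u' := by
      rw [hJ.coe_convUnitOfAlgHom_toAlgHom, hJ'.coe_convUnitOfAlgHom_toAlgHom,
        ← toConv_ofConv (_ * _), ← swMul_eq_ofConv_convMul]
      exact congrArg toConv (LinearMap.ext fun g => (hz g).symm)
    exact congrArg ofConv ((Units.eq_inv_mul_iff_mul_eq u).2 hJz)

/-- The group of unital algebra homomorphisms `H → Z(A)` acts freely and
transitively (from the right, by convolution) on the set of momentum maps of a given
`H`-module algebra action on `A`: for any two momentum maps `J, J'` there is a unique
unital algebra homomorphism `𝗓 : H → Z(A)` with `J' = J * 𝗓`. -/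
theorem existsUnique_central_twist_of_momentumMaps
    (k : Type*) [CommRing k]
    {H : Type*} [Ring H] [HopfAlgebra k H]
    {A : Type*} [Ring A] [Algebra k A]
    (act : H →ₗ[k] A →ₗ[k] A) (hact : IsModuleAlgebraAction k act)
    (J J' : H →ₗ[k] A) (hJ : IsMomentumMap k act J) (hJ' : IsMomentumMap k act J') :
    ∃! z : H →ₗ[k] A,
      ((∀ (g : H) (b : A), z g * b = b * z g) ∧ z 1 = 1
          ∧ ∀ g h : H, z (g * h) = z g * z h)
        ∧ ∀ g : H, J' g = swMul k J z g :=
  existsUnique_central_twist_of_momentumMaps_general k act J J' hJ hJ'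

end EquivariantMorita
end
end

section
/- Let H be a Hopf algebra over a commutative ring k and let A and B be unital associative k-algebras with left H-module algebra actions. Suppose there exists an H-equivariant (B,A)-bimodule E whose left-multiplication map λ : B → End_A(E) is a bijection onto the right-A-linear endomorphisms of E. If the H-action on A admits a momentum map, then the H-action on B admits a momentum map. In particular, the existence of a momentum map is invariant under H-equivariant Morita equivalence. -/
open scoped TensorProduct

noncomputable section

namespace EquivariantMorita

section BimodulePart

variable (k : Type*) [CommRing k]
variable {H : Type*} [Ring H] [HopfAlgebra k H]
variable {A : Type*} [Ring A] [Algebra k A]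
variable {B : Type*} [Ring B] [Algebra k B]
variable {E : Type*} [AddCommGroup E] [Module k E]

/-- `E` is a unital `(B,A)`-bimodule via the `k`-bilinear left multiplication `lB`
(`lB b x = b · x`) and right multiplication `rA` (`rA a x = x · a`). -/
structure IsBimodule (lB : B →ₗ[k] E →ₗ[k] E) (rA : A →ₗ[k] E →ₗ[k] E) : Prop where
  one_lsmul : ∀ x : E, lB 1 x = x
  mul_lsmul : ∀ (b b' : B) (x : E), lB (b * b') x = lB b (lB b' x)
  one_rsmul : ∀ x : E, rA 1 x = x
  mul_rsmul : ∀ (a a' : A) (x : E), rA (a * a') x = rA a' (rA a x)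
  lsmul_rsmul : ∀ (b : B) (a : A) (x : E), rA a (lB b x) = lB b (rA a x)

/-- `actE` makes the `(B,A)`-bimodule `E` (with multiplications `lB`, `rA`) an
`H`-equivariant bimodule: `(gh) ▷ x = g ▷ (h ▷ x)`, `1 ▷ x = x`,
`h ▷ (b·x) = (h₍₁₎ ▷ b)·(h₍₂₎ ▷ x)` and `h ▷ (x·a) = (h₍₁₎ ▷ x)·(h₍₂₎ ▷ a)`. -/
structure IsEquivariantBimodule (actB : H →ₗ[k] B →ₗ[k] B) (actA : H →ₗ[k] A →ₗ[k] A)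
    (lB : B →ₗ[k] E →ₗ[k] E) (rA : A →ₗ[k] E →ₗ[k] E)
    (actE : H →ₗ[k] E →ₗ[k] E) : Prop where
  mul_act : ∀ (g h : H) (x : E), actE (g * h) x = actE g (actE h x)
  one_act : ∀ x : E, actE 1 x = x
  act_lsmul : ∀ (h : H) (b : B) (x : E),
    actE h (lB b x) = sw k lB (actB.flip b) (actE.flip x) h
  act_rsmul : ∀ (h : H) (a : A) (x : E),
    actE h (rA a x) = sw k rA.flip (actE.flip x) (actA.flip a) h

/-- The canonical lift `h ▷ x = J^B(h₍₁₎) · (x · J^A(S(h₍₂₎)))` of the `H`-action to a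
`(B,A)`-bimodule along momentum maps, as a linear map in `h` for fixed `x`. -/
def momLift (JB : H →ₗ[k] B) (JA : H →ₗ[k] A)
    (lB : B →ₗ[k] E →ₗ[k] E) (rA : A →ₗ[k] E →ₗ[k] E) (x : E) : H →ₗ[k] E :=
  sw k lB JB (rA.flip x ∘ₗ (JA ∘ₗ HopfAlgebra.antipode (R := k)))

end BimodulePart

end EquivariantMorita

/-!
Let `J` be a momentum map for `A`. Then `(h₍₁₎ ▷ a) J(h₍₂₎) = J(h) a`, so for every `h` the
map `x ↦ (h₍₁₎ ▷ x) · J(h₍₂₎)` on `E` is right `A`-linear and hence is left multiplication by a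
unique `J'(h) ∈ B`. Equivariance of `E` makes `J'` a unital algebra map satisfying
`(h₍₁₎ ▷ b) J'(h₍₂₎) = J'(h) b`; since `J' ∘ S` is a convolution inverse of `J'`, this identity
is equivalent to `h ▷ b = J'(h₍₁₎) b J'(S h₍₂₎)`.
-/

namespace EquivariantMorita

open Coalgebra

section Sweedler

variable {k H M N P : Type*} [CommRing k] [AddCommGroup H] [Module k H] [Coalgebra k H]
  [AddCommGroup M] [Module k M] [AddCommGroup N] [Module k N] [AddCommGroup P] [Module k P]

theorem sw_apply_repr (μ : M →ₗ[k] N →ₗ[k] P) (f : H →ₗ[k] M) (g : H →ₗ[k] N) {h : H}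
    {ι : Type*} (r : Repr k h ι) :
    sw k μ f g h = ∑ i ∈ r.index, μ (f (r.left i)) (g (r.right i)) := by
  simp [sw, ← r.eq]

theorem sw_congr {M' N' : Type*} [AddCommGroup M'] [Module k M'] [AddCommGroup N'] [Module k N']
    {μ : M →ₗ[k] N →ₗ[k] P} {f : H →ₗ[k] M} {g : H →ₗ[k] N}
    {μ' : M' →ₗ[k] N' →ₗ[k] P} {f' : H →ₗ[k] M'} {g' : H →ₗ[k] N'}
    (h : ∀ a b : H, μ (f a) (g b) = μ' (f' a) (g' b)) : sw k μ f g = sw k μ' f' g' := by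
  ext c
  simp [sw_apply_repr _ _ _ (ℛ k c), h]

theorem comp_sw {P' : Type*} [AddCommGroup P'] [Module k P'] (T : P →ₗ[k] P')
    (μ : M →ₗ[k] N →ₗ[k] P) (f : H →ₗ[k] M) (g : H →ₗ[k] N) :
    T ∘ₗ sw k μ f g = sw k (μ.compr₂ T) f g := by
  ext c
  simp [sw_apply_repr _ _ _ (ℛ k c)]

theorem sw_counit_right (μ : M →ₗ[k] N →ₗ[k] P) (f : H →ₗ[k] M) (L : k →ₗ[k] N) :
    sw k μ f (L ∘ₗ counit) = μ.flip (L 1) ∘ₗ f := by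
  ext c
  have := congr(TensorProduct.lift (μ.compl₁₂ f L) $(sum_tmul_counit_eq (ℛ k c)))
  simp only [map_sum, TensorProduct.lift.tmul, LinearMap.compl₁₂_apply] at this
  simpa [sw_apply_repr _ _ _ (ℛ k c)] using this

theorem sw_assoc {M' N' Q Q' T U : Type*} [AddCommGroup M'] [Module k M'] [AddCommGroup N']
    [Module k N'] [AddCommGroup Q] [Module k Q] [AddCommGroup Q'] [Module k Q']
    [AddCommGroup T] [Module k T] [AddCommGroup U] [Module k U]
    {μ : M →ₗ[k] N →ₗ[k] P} {ν : P →ₗ[k] Q →ₗ[k] T} {f : H →ₗ[k] M} {g : H →ₗ[k] N}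
    {e : H →ₗ[k] Q} {ρ : N' →ₗ[k] Q' →ₗ[k] U} {σ : M' →ₗ[k] U →ₗ[k] T} {f' : H →ₗ[k] M'}
    {g' : H →ₗ[k] N'} {e' : H →ₗ[k] Q'}
    (h : ∀ a b c : H, ν (μ (f a) (g b)) (e c) = σ (f' a) (ρ (g' b) (e' c))) :
    sw k ν (sw k μ f g) e = sw k σ f' (sw k ρ g' e') := by
  ext c
  set r := ℛ k c
  have := congr(TensorProduct.lift (σ.compl₁₂ f' (TensorProduct.lift (ρ.compl₁₂ g' e')))
    $(sum_tmul_tmul_eq r (fun i ↦ ℛ k (r.left i)) (fun i ↦ ℛ k (r.right i))))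
  simp only [map_sum, TensorProduct.lift.tmul, LinearMap.compl₁₂_apply] at this
  simp [sw_apply_repr _ _ _ r, sw_apply_repr _ _ _ (ℛ k (r.left _)),
    sw_apply_repr _ _ _ (ℛ k (r.right _)), map_sum, h, this]

end Sweedler

section MomentumMap

open HopfAlgebra

variable {k H A : Type*} [CommRing k] [Ring H] [HopfAlgebra k H] [Ring A] [Algebra k A]

theorem swMul_comp_antipode {J : H →ₗ[k] A} (map_one : J 1 = 1)
    (map_mul : ∀ g h : H, J (g * h) = J g * J h) :
    swMul k J (J ∘ₗ antipode k) = Algebra.linearMap k A ∘ₗ counit := by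
  calc swMul k J (J ∘ₗ antipode k) = J ∘ₗ swMul k LinearMap.id (antipode k) := by
        rw [swMul, swMul, comp_sw]; exact sw_congr fun a b ↦ by simp [map_mul]
    _ = J ∘ₗ Algebra.linearMap k H ∘ₗ counit := by
        rw [← mul_antipode_lTensor_comul]; rfl
    _ = Algebra.linearMap k A ∘ₗ counit := by ext; simp [Algebra.algebraMap_eq_smul_one, map_one]

theorem swMul_antipode_comp {J : H →ₗ[k] A} (map_one : J 1 = 1)
    (map_mul : ∀ g h : H, J (g * h) = J g * J h) :
    swMul k (J ∘ₗ antipode k) J = Algebra.linearMap k A ∘ₗ counit := by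
  calc swMul k (J ∘ₗ antipode k) J = J ∘ₗ swMul k (antipode k) LinearMap.id := by
        rw [swMul, swMul, comp_sw]; exact sw_congr fun a b ↦ by simp [map_mul]
    _ = J ∘ₗ Algebra.linearMap k H ∘ₗ counit := by
        rw [← mul_antipode_rTensor_comul]; rfl
    _ = Algebra.linearMap k A ∘ₗ counit := by ext; simp [Algebra.algebraMap_eq_smul_one, map_one]

theorem IsMomentumMap.swMul_flip {act : H →ₗ[k] A →ₗ[k] A} {J : H →ₗ[k] A}
    (hJ : IsMomentumMap k act J) (a : A) :
    swMul k (act.flip a) J = LinearMap.mulRight k a ∘ₗ J := by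
  have inner : act.flip a = swMul k J (LinearMap.mul k A a ∘ₗ (J ∘ₗ antipode k)) := by
    ext h; exact hJ.inner' h a
  calc swMul k (act.flip a) J
      = sw k ((LinearMap.mul k A).compl₂ (LinearMap.mul k A a)) J
          (swMul k (J ∘ₗ antipode k) J) := by
        rw [inner, swMul, swMul, swMul]
        exact sw_assoc fun _ _ _ ↦ by simp [mul_assoc]
    _ = LinearMap.mulRight k a ∘ₗ J := by
        rw [swMul_antipode_comp hJ.map_one' hJ.map_mul', sw_counit_right]; ext; simp

theorem isMomentumMap_of_swMul_flip {act : H →ₗ[k] A →ₗ[k] A} {J : H →ₗ[k] A}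
    (map_one : J 1 = 1) (map_mul : ∀ g h : H, J (g * h) = J g * J h)
    (swMul_flip : ∀ a : A, swMul k (act.flip a) J = LinearMap.mulRight k a ∘ₗ J) :
    IsMomentumMap k act J := by
  refine ⟨map_one, map_mul, fun h a ↦ LinearMap.congr_fun (?_ : act.flip a = _) h⟩
  calc act.flip a = swMul k (act.flip a) (Algebra.linearMap k A ∘ₗ counit) := by
        rw [swMul, sw_counit_right]; ext; simp
    _ = swMul k (swMul k (act.flip a) J) (J ∘ₗ antipode k) := by
        rw [← swMul_comp_antipode map_one map_mul, swMul, swMul, swMul, swMul]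
        exact (sw_assoc fun _ _ _ ↦ by simp [mul_assoc]).symm
    _ = swMul k J (LinearMap.mul k A a ∘ₗ (J ∘ₗ antipode k)) := by
        rw [swMul_flip, swMul, swMul]
        exact sw_congr fun _ _ ↦ by simp [mul_assoc]

end MomentumMap

theorem exists_comp_eq_of_injective {R M N P : Type*} [Semiring R] [AddCommMonoid M]
    [Module R M] [AddCommMonoid N] [Module R N] [AddCommMonoid P] [Module R P] {f : M →ₗ[R] N}
    (hf : Function.Injective f) (g : P →ₗ[R] N) (hg : ∀ p, g p ∈ LinearMap.range f) :
    ∃ h : P →ₗ[R] M, f ∘ₗ h = g :=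
  ⟨(LinearEquiv.ofInjective f hf).symm.toLinearMap ∘ₗ g.codRestrict _ hg, by ext; simp⟩

section Bimodule

variable {k H A B E : Type*} [CommRing k] [Ring H] [HopfAlgebra k H] [Ring A] [Algebra k A]
  [Ring B] [Algebra k B] [AddCommGroup E] [Module k E]

variable (k) in
def twistedAct (actE : H →ₗ[k] E →ₗ[k] E) (rA : A →ₗ[k] E →ₗ[k] E) (J : H →ₗ[k] A) :
    H →ₗ[k] E →ₗ[k] E :=
  sw k (LinearMap.llcomp k E E E).flip actE (rA ∘ₗ J)

variable {actA : H →ₗ[k] A →ₗ[k] A} {actB : H →ₗ[k] B →ₗ[k] B} {lB : B →ₗ[k] E →ₗ[k] E}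
  {rA : A →ₗ[k] E →ₗ[k] E} {actE : H →ₗ[k] E →ₗ[k] E} {J : H →ₗ[k] A}

theorem twistedAct_apply_repr {h : H} {ι : Type*} (r : Repr k h ι) (x : E) :
    twistedAct k actE rA J h x = ∑ i ∈ r.index, rA (J (r.right i)) (actE (r.left i) x) := by
  simp [twistedAct, sw_apply_repr _ _ _ r]

theorem twistedAct_flip (x : E) :
    (twistedAct k actE rA J).flip x = sw k rA.flip (actE.flip x) J := by
  ext h
  simp [twistedAct_apply_repr (ℛ k h), sw_apply_repr _ _ _ (ℛ k h)]

theorem twistedAct_one (hbim : IsBimodule k lB rA)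
    (heq : IsEquivariantBimodule k actB actA lB rA actE) (map_one : J 1 = 1) :
    twistedAct k actE rA J 1 = LinearMap.id := by
  ext x
  simp [twistedAct, sw, Algebra.TensorProduct.one_def, map_one, heq.one_act, hbim.one_rsmul]

theorem twistedAct_rsmul (hJ : IsMomentumMap k actA J) (hbim : IsBimodule k lB rA)
    (heq : IsEquivariantBimodule k actB actA lB rA actE) (h : H) (a : A) (x : E) :
    twistedAct k actE rA J h (rA a x) = rA a (twistedAct k actE rA J h x) := by
  suffices (twistedAct k actE rA J).flip (rA a x) = rA a ∘ₗ (twistedAct k actE rA J).flip x from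
    LinearMap.congr_fun this h
  calc (twistedAct k actE rA J).flip (rA a x)
      = sw k rA.flip (sw k rA.flip (actE.flip x) (actA.flip a)) J := by
        rw [twistedAct_flip]; congr 1; ext; exact heq.act_rsmul _ _ _
    _ = sw k rA.flip (actE.flip x) (swMul k (actA.flip a) J) :=
        sw_assoc fun _ _ _ ↦ (hbim.mul_rsmul _ _ _).symm
    _ = rA a ∘ₗ (twistedAct k actE rA J).flip x := by
        rw [hJ.swMul_flip, twistedAct_flip, comp_sw]
        exact sw_congr fun _ _ ↦ hbim.mul_rsmul _ _ _

theorem twistedAct_mul (hJ : IsMomentumMap k actA J) (hbim : IsBimodule k lB rA)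
    (heq : IsEquivariantBimodule k actB actA lB rA actE) (g h : H) :
    twistedAct k actE rA J (g * h) = twistedAct k actE rA J g ∘ₗ twistedAct k actE rA J h := by
  ext x
  set r := ℛ k g
  set t := ℛ k h
  calc twistedAct k actE rA J (g * h) x
      = ∑ j ∈ t.index, rA (J (t.right j))
          (∑ i ∈ r.index, rA (J (r.right i)) (actE (r.left i) (actE (t.left j) x))) := by
        rw [twistedAct_apply_repr (r.mul t), Repr.mul_index, Finset.sum_product, Finset.sum_comm]
        simp [hJ.map_mul', hbim.mul_rsmul, heq.mul_act]
    _ = ∑ j ∈ t.index, twistedAct k actE rA J g (rA (J (t.right j)) (actE (t.left j) x)) := by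
        simp only [← twistedAct_apply_repr r, twistedAct_rsmul hJ hbim heq]
    _ = twistedAct k actE rA J g (twistedAct k actE rA J h x) := by
        rw [twistedAct_apply_repr t, map_sum]

theorem sw_lsmul_twistedAct (hbim : IsBimodule k lB rA)
    (heq : IsEquivariantBimodule k actB actA lB rA actE) (b : B) (x : E) :
    sw k lB (actB.flip b) ((twistedAct k actE rA J).flip x) =
      (twistedAct k actE rA J).flip (lB b x) := by
  calc sw k lB (actB.flip b) ((twistedAct k actE rA J).flip x)
      = sw k rA.flip (sw k lB (actB.flip b) (actE.flip x)) J := by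
        rw [twistedAct_flip]
        exact (sw_assoc fun _ _ _ ↦ hbim.lsmul_rsmul _ _ _).symm
    _ = (twistedAct k actE rA J).flip (lB b x) := by
        rw [twistedAct_flip]; congr 1; ext; exact (heq.act_lsmul _ _ _).symm

theorem swMul_flip_of_lsmul_eq_twistedAct (hbim : IsBimodule k lB rA)
    (heq : IsEquivariantBimodule k actB actA lB rA actE)
    (hinj : ∀ b b' : B, (∀ x : E, lB b x = lB b' x) → b = b') {J' : H →ₗ[k] B}
    (hJ' : ∀ h, lB (J' h) = twistedAct k actE rA J h) (b : B) :
    swMul k (actB.flip b) J' = LinearMap.mulRight k b ∘ₗ J' := by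
  ext h
  refine hinj _ _ fun x ↦ ?_
  calc lB (swMul k (actB.flip b) J' h) x
      = sw k lB (actB.flip b) ((twistedAct k actE rA J).flip x) h := by
        change (lB.flip x ∘ₗ swMul k (actB.flip b) J') h = _
        rw [swMul, comp_sw]
        exact LinearMap.congr_fun (sw_congr fun _ _ ↦ by simp [hbim.mul_lsmul, hJ']) h
    _ = lB (J' h * b) x := by
        rw [sw_lsmul_twistedAct hbim heq, LinearMap.flip_apply, ← hJ', hbim.mul_lsmul]

end Bimodule

theorem momentumMap_exists_of_equivariant_bimodule_general
    (k : Type*) [CommRing k]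
    {H : Type*} [Ring H] [HopfAlgebra k H]
    {A : Type*} [Ring A] [Algebra k A]
    {B : Type*} [Ring B] [Algebra k B]
    {E : Type*} [AddCommGroup E] [Module k E]
    (actA : H →ₗ[k] A →ₗ[k] A)
    (actB : H →ₗ[k] B →ₗ[k] B)
    (lB : B →ₗ[k] E →ₗ[k] E) (rA : A →ₗ[k] E →ₗ[k] E) (hbim : IsBimodule k lB rA)
    (actE : H →ₗ[k] E →ₗ[k] E)
    (heq : IsEquivariantBimodule k actB actA lB rA actE)
    (hinj : ∀ b b' : B, (∀ x : E, lB b x = lB b' x) → b = b')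
    (hsurj : ∀ φ : E →ₗ[k] E, (∀ (a : A) (x : E), φ (rA a x) = rA a (φ x)) →
      ∃ b : B, ∀ x : E, φ x = lB b x) :
    (∃ J : H →ₗ[k] A, IsMomentumMap k actA J) →
      ∃ J' : H →ₗ[k] B, IsMomentumMap k actB J' := by
  rintro ⟨J, hJ⟩
  set T := twistedAct k actE rA J
  obtain ⟨J', hJ'⟩ : ∃ J' : H →ₗ[k] B, lB ∘ₗ J' = T := by
    refine exists_comp_eq_of_injective (fun b b' hb ↦ hinj b b' (LinearMap.congr_fun hb)) T
      fun h ↦ ?_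
    obtain ⟨b, hb⟩ := hsurj (T h) (twistedAct_rsmul hJ hbim heq h)
    exact ⟨b, (LinearMap.ext hb).symm⟩
  have lB_J' (h : H) : lB (J' h) = T h := LinearMap.congr_fun hJ' h
  refine ⟨J', isMomentumMap_of_swMul_flip ?_ ?_
    (swMul_flip_of_lsmul_eq_twistedAct hbim heq hinj lB_J')⟩
  · refine hinj _ _ fun x ↦ ?_
    rw [lB_J', twistedAct_one hbim heq hJ.map_one', hbim.one_lsmul, LinearMap.id_apply]
  · refine fun g h ↦ hinj _ _ fun x ↦ ?_
    rw [hbim.mul_lsmul, lB_J', lB_J', lB_J', twistedAct_mul hJ hbim heq, LinearMap.comp_apply]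

/-- If there is an `H`-equivariant `(B,A)`-bimodule `E` whose
left-multiplication map `λ : B → End_A(E)` is bijective, and the `H`-action on `A` admits
a momentum map, then the `H`-action on `B` admits a momentum map. In particular, the
existence of a momentum map is invariant under `H`-equivariant Morita equivalence. -/
theorem momentumMap_exists_of_equivariant_bimodule
    (k : Type*) [CommRing k]
    {H : Type*} [Ring H] [HopfAlgebra k H]
    {A : Type*} [Ring A] [Algebra k A]
    {B : Type*} [Ring B] [Algebra k B]
    {E : Type*} [AddCommGroup E] [Module k E]
    (actA : H →ₗ[k] A →ₗ[k] A) (hactA : IsModuleAlgebraAction k actA)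
    (actB : H →ₗ[k] B →ₗ[k] B) (hactB : IsModuleAlgebraAction k actB)
    (lB : B →ₗ[k] E →ₗ[k] E) (rA : A →ₗ[k] E →ₗ[k] E) (hbim : IsBimodule k lB rA)
    (actE : H →ₗ[k] E →ₗ[k] E)
    (heq : IsEquivariantBimodule k actB actA lB rA actE)
    (hinj : ∀ b b' : B, (∀ x : E, lB b x = lB b' x) → b = b')
    (hsurj : ∀ φ : E →ₗ[k] E, (∀ (a : A) (x : E), φ (rA a x) = rA a (φ x)) →
      ∃ b : B, ∀ x : E, φ x = lB b x) :
    (∃ J : H →ₗ[k] A, IsMomentumMap k actA J) →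
      ∃ J' : H →ₗ[k] B, IsMomentumMap k actB J' :=
  momentumMap_exists_of_equivariant_bimodule_general k actA actB lB rA hbim actE heq hinj hsurj

end EquivariantMorita
end
end
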